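/- arXiv:2312.14777 — 9 statements merged into one kernel-verified Lean document; each statement's English description precedes it below -/
import Mathlib

section
/- For any graph G = (V,E), p : V → ℤ_{>0}, and m ≥ 1, every feasible solution (x̃, ỹ) of the linear relaxation of the assignment formulation satisfies ỹ ≥ (1/m)·Σ_{v∈V} p(v). Consequently, the optimal value of this LP relaxation (for m ≥ 2) is exactly (1/m)·Σ_{v∈V} p(v). -/
/-!
Summing the load constraints over the `m` machines and using the covering constraints gives
`Σ p ≤ m · ỹ`. The uniform assignment `x̃ ≡ 1/m` attains this bound; it satisfies the edge
constraints `2/m ≤ 1` exactly when `m ≥ 2`.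
-/

open Finset

section AssignmentLP

variable {V ι K : Type*} [Fintype V] [Fintype ι] [Field K] [LinearOrder K] [IsStrictOrderedRing K]

/-- `ι` indexes the machines. -/
def IsAssignmentLPFeasible (G : SimpleGraph V) (p : V → K) (x : V → ι → K) (y : K) : Prop :=
  (∀ v k, 0 ≤ x v k ∧ x v k ≤ 1) ∧
  (∀ v, 1 ≤ ∑ k, x v k) ∧
  (∀ u v k, G.Adj u v → x u k + x v k ≤ 1) ∧
  (∀ k, ∑ v, p v * x v k ≤ y)

theorem sum_le_card_mul_of_cover (p : V → K) (hp : ∀ v, 0 ≤ p v) (x : V → ι → K) (y : K)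
    (hcover : ∀ v, 1 ≤ ∑ k, x v k) (hload : ∀ k, ∑ v, p v * x v k ≤ y) :
    ∑ v, p v ≤ Fintype.card ι * y :=
  calc ∑ v, p v
      ≤ ∑ v, p v * ∑ k, x v k :=
        sum_le_sum fun v _ => le_mul_of_one_le_right (hp v) (hcover v)
    _ = ∑ k, ∑ v, p v * x v k := by simp only [mul_sum]; exact sum_comm
    _ ≤ ∑ _k : ι, y := sum_le_sum fun k _ => hload k
    _ = Fintype.card ι * y := by rw [sum_const, card_univ, nsmul_eq_mul]

theorem isAssignmentLPFeasible_uniform (G : SimpleGraph V) (p : V → K)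
    (hι : 2 ≤ Fintype.card ι) :
    IsAssignmentLPFeasible G p (fun (_ : V) (_ : ι) => (Fintype.card ι : K)⁻¹)
      ((∑ v, p v) / Fintype.card ι) := by
  have hm : (2 : K) ≤ Fintype.card ι := by exact_mod_cast hι
  have hm0 : (0 : K) < Fintype.card ι := by linarith
  refine ⟨fun _ _ => ⟨by positivity, inv_le_one_of_one_le₀ (by linarith)⟩, fun _ => ?_,
    fun _ _ _ _ => ?_, fun _ => ?_⟩
  · simp [hm0.ne']
  · rw [← two_mul, ← div_eq_mul_inv, div_le_one hm0]
    exact hm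
  · rw [← sum_mul, div_eq_mul_inv]

end AssignmentLP

/-- Every feasible solution of the LP relaxation of the assignment formulation
of PMC satisfies `ỹ ≥ (Σ p)/m`, and for `m ≥ 2` this bound is attained: the
optimal LP value is exactly `(Σ p)/m`. -/
theorem stmt4 {V : Type*} [Fintype V] (G : SimpleGraph V) (p : V → ℤ)
    (hp : ∀ v, 0 < p v) (m : ℕ) (hm : 2 ≤ m) :
    IsLeast {y : ℚ | 0 ≤ y ∧ ∃ x : V → Fin m → ℚ,
        (∀ v k, 0 ≤ x v k ∧ x v k ≤ 1) ∧
        (∀ v, 1 ≤ ∑ k, x v k) ∧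
        (∀ u v k, G.Adj u v → x u k + x v k ≤ 1) ∧
        (∀ k, ∑ v, (p v : ℚ) * x v k ≤ y)}
      ((∑ v, (p v : ℚ)) / m) := by
  have hp_nonneg : ∀ v, (0 : ℚ) ≤ p v := fun v => by exact_mod_cast (hp v).le
  constructor
  · have hfeas := isAssignmentLPFeasible_uniform (ι := Fin m) G (fun v => (p v : ℚ))
      (by rwa [Fintype.card_fin])
    rw [Fintype.card_fin] at hfeas
    exact ⟨div_nonneg (sum_nonneg fun v _ => hp_nonneg v) m.cast_nonneg, _, hfeas⟩
  · rintro y ⟨-, x, -, hcover, -, hload⟩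
    have hbound := sum_le_card_mul_of_cover _ hp_nonneg x y hcover hload
    rw [Fintype.card_fin] at hbound
    rw [div_le_iff₀ (by positivity), mul_comm]
    exact hbound
end

section
/- Let G = (V,E), let STAB LP solutions be considered, and fix a machine index k and a set U ⊆ V. For each u ∈ U let α_u be the maximum size of a stable set of G[U] containing u. Then the inequality Σ_{u∈U} (1/α_u)·x̃_{uk} ≤ 1 is valid for every integer feasible solution x̃ of the assignment formulation of PMC, i.e., for every x̃ ∈ {0,1}^{V×[m]} such that the set of jobs assigned to each machine is a stable set of G. -/
/-- The external inequalities `Σ_{u∈U} x̃_{uk}/α_u ≤ 1` are valid for every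
0/1 feasible solution of the assignment formulation of PMC, where `α_u` is the
maximum size of a stable set of `G[U]` containing `u`. -/
theorem stmt7 {V : Type*} [Fintype V] [DecidableEq V] (G : SimpleGraph V)
    (m : ℕ) (U : Finset V) (αu : V → ℕ)
    (hα : ∀ u ∈ U, IsGreatest {k | ∃ W ⊆ U,
        (∀ a ∈ W, ∀ b ∈ W, a ≠ b → ¬ G.Adj a b) ∧ u ∈ W ∧ W.card = k} (αu u))
    (x : V → Fin m → ℚ)
    (hx01 : ∀ v k, x v k = 0 ∨ x v k = 1)
    (hstab : ∀ (k : Fin m) (u v : V), x u k = 1 → x v k = 1 → ¬ G.Adj u v) :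
    ∀ k : Fin m, ∑ u ∈ U, x u k / (αu u : ℚ) ≤ 1 := by
  intro k
  classical
  set S : Finset V := U.filter (fun u => x u k = 1) with hS
  -- Each u ∈ S gives S.card ≤ αu u
  have hcard : ∀ u ∈ S, S.card ≤ αu u := by
    intro u hu
    have huU : u ∈ U := Finset.mem_filter.mp hu |>.1
    apply (hα u huU).2
    exact ⟨S, Finset.filter_subset _ _,
      fun a ha b hb _ => hstab k a b (Finset.mem_filter.mp ha).2 (Finset.mem_filter.mp hb).2,
      hu, rfl⟩
  have key : ∀ u ∈ U, x u k / (αu u : ℚ) ≤ if u ∈ S then ((S.card : ℚ))⁻¹ else 0 := by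
    intro u hu
    rcases hx01 u k with h0 | h1
    · have : u ∉ S := by
        simp [hS, Finset.mem_filter, h0]
      simp [this, h0]
    · have huS : u ∈ S := Finset.mem_filter.mpr ⟨hu, h1⟩
      have hpos : 0 < S.card := Finset.card_pos.mpr ⟨u, huS⟩
      have h1le : (S.card : ℚ) ≤ (αu u : ℚ) := by exact_mod_cast hcard u huS
      have hposQ : (0:ℚ) < S.card := by exact_mod_cast hpos
      rw [h1, if_pos huS, one_div]
      exact inv_anti₀ hposQ h1le
  calc ∑ u ∈ U, x u k / (αu u : ℚ)
      ≤ ∑ u ∈ U, (if u ∈ S then ((S.card : ℚ))⁻¹ else 0) := Finset.sum_le_sum key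
    _ = ∑ u ∈ U.filter (· ∈ S), ((S.card : ℚ))⁻¹ := by rw [Finset.sum_filter]
    _ = ∑ u ∈ S, ((S.card : ℚ))⁻¹ := by
        congr 1
        ext u
        constructor
        · exact fun h => (Finset.mem_filter.mp h).2
        · exact fun h => Finset.mem_filter.mpr ⟨(Finset.mem_filter.mp h).1, h⟩
    _ = S.card * ((S.card : ℚ))⁻¹ := by rw [Finset.sum_const, nsmul_eq_mul]
    _ ≤ 1 := by
        rcases Nat.eq_zero_or_pos S.card with h | h
        · simp [h]
        · rw [mul_inv_cancel₀ (by exact_mod_cast h.ne' : (S.card:ℚ) ≠ 0)]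
end

section
/- Let G = (V,E), ≺ a total order on V, U ⊆ V, and S_U = {v ∈ U : N̄⁻(v) ∩ U = ∅}. For every feasible 0/1 solution x of the representatives formulation, the inequality Σ_{v ∈ U∖S_U} Σ_{u ∈ (N̄⁻(v)∖U) ∪ {v}} x_{uv} ≥ χ(G[U]) − |S_U| holds, where χ denotes the chromatic number. -/
/-!
Choose for every vertex `v` a representative `rep v` with `x (rep v) v = 1`: `v` itself when
`x v v = 1`, and otherwise a nonadjacent predecessor, which exists by the covering constraint.
The edge constraints make `rep` a proper colouring, and the link constraints make it idempotent.
Hence every colour used on `U` is the colour of a vertex of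
`T = {v ∈ U | rep v = v ∨ rep v ∉ U}`, so `χ(G[U]) ≤ |T|`. Every `v ∈ T` contributes at least `1`
to its own term of the sum (through `x v v` or through `x (rep v) v` with `rep v ∉ U`), and at
most `|S_U|` elements of `T` lie in `S_U`.
-/

open Finset

theorem SimpleGraph.chromaticNumber_induce_le_card_image {V α : Type*} [DecidableEq α]
    {G : SimpleGraph V} (f : V → α) (hf : ∀ {v w}, G.Adj v w → f v ≠ f w) (U : Finset V) :
    (G.induce (U : Set V)).chromaticNumber ≤ #(U.image f) := by
  let C : (G.induce (U : Set V)).Coloring (U.image f) :=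
    Coloring.mk (fun v => ⟨f v, mem_image_of_mem f v.2⟩)
      (fun hvw heq => hf hvw (congrArg Subtype.val heq))
  simpa using C.colorable.chromaticNumber_le

theorem Finset.card_le_card_add_sum_sdiff {ι : Type*} [DecidableEq ι] {T U : Finset ι}
    (S : Finset ι) (f : ι → ℚ) (hTU : T ⊆ U) (hf_nonneg : ∀ i ∈ U, 0 ≤ f i)
    (hf_one : ∀ i ∈ T, 1 ≤ f i) :
    (#T : ℚ) ≤ #S + ∑ i ∈ U \ S, f i := by
  have hcard : #T ≤ #S + #(T \ S) := by
    rw [add_comm]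
    exact card_le_card_sdiff_add_card
  calc (#T : ℚ) ≤ #S + #(T \ S) := by exact_mod_cast hcard
    _ = #S + ∑ _i ∈ T \ S, (1 : ℚ) := by simp
    _ ≤ #S + ∑ i ∈ T \ S, f i := by
      gcongr with i hi
      exact hf_one i (mem_sdiff.1 hi).1
    _ ≤ #S + ∑ i ∈ U \ S, f i := by
      gcongr
      exact fun i hi _ => hf_nonneg i (mem_sdiff.1 hi).1

theorem Finset.image_subset_image_filter_of_idempotent {α : Type*} [DecidableEq α] {f : α → α}
    (hf : ∀ a, f (f a) = f a) (U : Finset α) :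
    U.image f ⊆ (U.filter fun a => f a = a ∨ f a ∉ U).image f := by
  intro c hc
  obtain ⟨a, haU, rfl⟩ := mem_image.1 hc
  by_cases hfa : f a ∈ U
  · exact mem_image.2 ⟨f a, mem_filter.2 ⟨hfa, Or.inl (hf a)⟩, hf a⟩
  · exact mem_image_of_mem f (mem_filter.2 ⟨haU, Or.inr hfa⟩)

namespace RepresentativesFormulation

variable {V : Type*} [LinearOrder V] {G : SimpleGraph V} {x : V → V → ℚ} {rep : V → V}

theorem exists_representative [Fintype V] [DecidableRel G.Adj]
    (hx01 : ∀ u v, x u v = 0 ∨ x u v = 1)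
    (hcover : ∀ v, 1 ≤ x v v +
        ∑ u ∈ Finset.univ.filter (fun u => u < v ∧ ¬ G.Adj u v), x u v) (v : V) :
    ∃ u, x u v = 1 ∧ (u = v ∨ u < v ∧ ¬ G.Adj u v) ∧ (x v v = 1 → u = v) := by
  by_cases hvv : x v v = 1
  · exact ⟨v, hvv, Or.inl rfl, fun _ => rfl⟩
  have hsum : ∑ u ∈ univ.filter (fun u => u < v ∧ ¬ G.Adj u v), x u v ≠ 0 := by
    have := hcover v
    rw [(hx01 v v).resolve_right hvv] at this
    linarith
  obtain ⟨u, hu, hxu⟩ := exists_ne_zero_of_sum_ne_zero hsum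
  exact ⟨u, (hx01 u v).resolve_left hxu, Or.inr (by simpa using hu), fun h => absurd h hvv⟩

theorem rep_ne_of_adj_left
    (hdom : ∀ u v, x u v = 1 → u ≤ v ∧ (u = v ∨ ¬ G.Adj u v))
    (hrep : ∀ v, x (rep v) v = 1) {v w : V} (hvw : G.Adj v w) :
    rep w ≠ v := by
  intro hw
  rcases (hdom v w (hw ▸ hrep w)).2 with rfl | hnadj
  · exact G.irrefl hvw
  · exact hnadj hvw

theorem rep_ne_of_adj (hx01 : ∀ u v, x u v = 0 ∨ x u v = 1)
    (hdom : ∀ u v, x u v = 1 → u ≤ v ∧ (u = v ∨ ¬ G.Adj u v))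
    (hedge : ∀ v u w, v < u → v < w → ¬ G.Adj v u → ¬ G.Adj v w → G.Adj u w →
        x v u + x v w ≤ x v v)
    (hrep : ∀ v, x (rep v) v = 1)
    (hrep_lt : ∀ v, rep v = v ∨ rep v < v ∧ ¬ G.Adj (rep v) v) {v w : V} (hvw : G.Adj v w) :
    rep v ≠ rep w := by
  rcases hrep_lt v with hv | ⟨hv, hv'⟩
  · exact fun h => rep_ne_of_adj_left hdom hrep hvw (h.symm.trans hv)
  rcases hrep_lt w with hw | ⟨hw, hw'⟩
  · exact fun h => rep_ne_of_adj_left hdom hrep hvw.symm (h.trans hw)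
  intro h
  rw [h] at hv hv'
  have hsum := hedge (rep w) v w hv hw hv' hw' hvw
  rw [← h, hrep v, h, hrep w] at hsum
  rcases hx01 (rep w) (rep w) with h0 | h1 <;> linarith

theorem rep_rep (hx01 : ∀ u v, x u v = 0 ∨ x u v = 1)
    (hlink : ∀ v u, v < u → ¬ G.Adj v u → x v u ≤ x v v)
    (hrep : ∀ v, x (rep v) v = 1)
    (hrep_lt : ∀ v, rep v = v ∨ rep v < v ∧ ¬ G.Adj (rep v) v)
    (hrep_self : ∀ v, x v v = 1 → rep v = v) (v : V) :
    rep (rep v) = rep v := by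
  rcases hrep_lt v with hv | ⟨hv, hv'⟩
  · rw [hv, hv]
  refine hrep_self _ ((hx01 _ _).resolve_left fun h0 => ?_)
  have := hlink _ _ hv hv'
  rw [hrep v, h0] at this
  norm_num at this

theorem one_le_self_add_sum_outside [Fintype V] [DecidableRel G.Adj]
    (hx0 : ∀ u v, 0 ≤ x u v) (hrep : ∀ v, x (rep v) v = 1)
    (hrep_lt : ∀ v, rep v = v ∨ rep v < v ∧ ¬ G.Adj (rep v) v) {U : Finset V} {v : V}
    (hv : rep v = v ∨ rep v ∉ U) :
    1 ≤ x v v + ∑ u ∈ (Finset.univ.filter (fun u => u < v ∧ ¬ G.Adj u v)) \ U, x u v := by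
  rcases hrep_lt v with hself | ⟨hlt, hnadj⟩
  · have := hrep v
    rw [hself] at this
    linarith [sum_nonneg fun u (_ : u ∈ (univ.filter (fun u => u < v ∧ ¬ G.Adj u v)) \ U) =>
      hx0 u v]
  have hout : rep v ∉ U := hv.resolve_left hlt.ne
  have hmem : rep v ∈ (univ.filter (fun u => u < v ∧ ¬ G.Adj u v)) \ U := by
    simp [hlt, hnadj, hout]
  linarith [hx0 v v, hrep v, single_le_sum (fun u _ => hx0 u v) hmem]

end RepresentativesFormulation

open RepresentativesFormulation

theorem stmt11_general {V : Type*} [Fintype V] [LinearOrder V] (G : SimpleGraph V)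
    [DecidableRel G.Adj] (U : Finset V)
    (SU : Finset V)
    (x : V → V → ℚ)
    (hx01 : ∀ u v, x u v = 0 ∨ x u v = 1)
    (hdom : ∀ u v, x u v = 1 → u ≤ v ∧ (u = v ∨ ¬ G.Adj u v))
    (hcover : ∀ v, 1 ≤ x v v +
        ∑ u ∈ Finset.univ.filter (fun u => u < v ∧ ¬ G.Adj u v), x u v)
    (hedge : ∀ v u w, v < u → v < w → ¬ G.Adj v u → ¬ G.Adj v w → G.Adj u w →
        x v u + x v w ≤ x v v)
    (hlink : ∀ v u, v < u → ¬ G.Adj v u → x v u ≤ x v v)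
    (χU : ℕ) (hχ : (G.induce (U : Set V)).chromaticNumber = (χU : ℕ∞)) :
    (χU : ℚ) - SU.card ≤
      ∑ v ∈ U \ SU, (x v v +
        ∑ u ∈ (Finset.univ.filter (fun u => u < v ∧ ¬ G.Adj u v)) \ U, x u v) := by
  classical
  choose rep hrep hrep_lt hrep_self using exists_representative hx01 hcover
  have hx0 : ∀ u v, 0 ≤ x u v := fun u v => (hx01 u v).elim (·.ge) (· ▸ zero_le_one)
  set T := U.filter fun v => rep v = v ∨ rep v ∉ U
  have hχ_image : (χU : ℕ∞) ≤ #(U.image rep) :=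
    hχ ▸ G.chromaticNumber_induce_le_card_image rep (rep_ne_of_adj hx01 hdom hedge hrep hrep_lt) U
  have hχT : χU ≤ #T := by
    calc χU ≤ #(U.image rep) := by exact_mod_cast hχ_image
      _ ≤ #(T.image rep) := card_le_card <|
          image_subset_image_filter_of_idempotent (rep_rep hx01 hlink hrep hrep_lt hrep_self) U
      _ ≤ #T := card_image_le
  have hT := card_le_card_add_sum_sdiff SU _ (filter_subset _ U)
    (fun v _ => add_nonneg (hx0 v v) (sum_nonneg fun u _ => hx0 u v))
    (fun v hv => one_le_self_add_sum_outside hx0 hrep hrep_lt (U := U) (mem_filter.1 hv).2)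
  have : (χU : ℚ) ≤ #T := by exact_mod_cast hχT
  linarith

/-- The subgraph-induced inequality
`Σ_{v∈U∖S_U} Σ_{u∈(N̄⁻(v)∖U)∪{v}} x_{uv} ≥ χ(G[U]) − |S_U|`
is valid for every 0/1 feasible solution of the representatives formulation. -/
theorem stmt11 {V : Type*} [Fintype V] [LinearOrder V] (G : SimpleGraph V)
    [DecidableRel G.Adj] (U : Finset V)
    (SU : Finset V) (hSU : SU = U.filter (fun v => ∀ u ∈ U, u < v → G.Adj u v))
    (x : V → V → ℚ)
    (hx01 : ∀ u v, x u v = 0 ∨ x u v = 1)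
    (hdom : ∀ u v, x u v = 1 → u ≤ v ∧ (u = v ∨ ¬ G.Adj u v))
    (hcover : ∀ v, 1 ≤ x v v +
        ∑ u ∈ Finset.univ.filter (fun u => u < v ∧ ¬ G.Adj u v), x u v)
    (hedge : ∀ v u w, v < u → v < w → ¬ G.Adj v u → ¬ G.Adj v w → G.Adj u w →
        x v u + x v w ≤ x v v)
    (hlink : ∀ v u, v < u → ¬ G.Adj v u → x v u ≤ x v v)
    (χU : ℕ) (hχ : (G.induce (U : Set V)).chromaticNumber = (χU : ℕ∞)) :
    (χU : ℚ) - SU.card ≤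
      ∑ v ∈ U \ SU, (x v v +
        ∑ u ∈ (Finset.univ.filter (fun u => u < v ∧ ¬ G.Adj u v)) \ U, x u v) :=
  stmt11_general G U SU x hx01 hdom hcover hedge hlink χU hχ
end

section
/- For integers ℓ ≥ 2 and q ≥ 2ℓ, the antiweb W̄_ℓ^q (the complement of the web W_ℓ^q) has maximum stable set size α(W̄_ℓ^q) = ⌊q/ℓ⌋. -/
/-- The web `W_ℓ^q`: vertices `{0,…,q−1}`, `i ~ j` iff `ℓ ≤ |i−j| ≤ q−ℓ`. -/
def webGraph (q ℓ : ℕ) : SimpleGraph (Fin q) :=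
  SimpleGraph.fromRel (fun i j =>
    ℓ ≤ max i.val j.val - min i.val j.val ∧ max i.val j.val - min i.val j.val ≤ q - ℓ)

/-! A stable set of the antiweb is a clique of the web. The multiples `0, ℓ, …, (⌊q/ℓ⌋ - 1) ℓ`
form such a clique. Conversely, the elements of a clique lie in a window `[x₀, x₀ + q - ℓ]` above
its least element `x₀` and are pairwise at distance at least `ℓ`, so `x ↦ ⌊(x - x₀)/ℓ⌋` maps it
injectively into `{0, …, ⌊(q - ℓ)/ℓ⌋}`, a set of `⌊q/ℓ⌋` elements. -/

theorem Finset.card_le_div_add_one_of_forall_add_le {s : Finset ℕ} {a n ℓ : ℕ} (hℓ : 0 < ℓ)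
    (hs : ∀ x ∈ s, a ≤ x ∧ x ≤ a + n) (hsep : ∀ x ∈ s, ∀ y ∈ s, x < y → x + ℓ ≤ y) :
    s.card ≤ n / ℓ + 1 := by
  have hmono : StrictMonoOn (fun x => (x - a) / ℓ) (s : Set ℕ) := by
    intro x hx y hy hxy
    have hstep : (x - a) + ℓ ≤ y - a := by
      have := hsep x hx y hy hxy
      have := hs x hx
      omega
    calc (x - a) / ℓ < (x - a) / ℓ + 1 := Nat.lt_succ_self _
      _ = ((x - a) + ℓ) / ℓ := (Nat.add_div_right _ hℓ).symm
      _ ≤ (y - a) / ℓ := Nat.div_le_div_right hstep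
  have hmaps : Set.MapsTo (fun x => (x - a) / ℓ) s (Finset.range (n / ℓ + 1)) := fun x hx =>
    Finset.mem_range.mpr <| Nat.lt_succ_of_le <| Nat.div_le_div_right (by have := hs x hx; omega)
  simpa using Finset.card_le_card_of_injOn _ hmaps hmono.injOn

theorem webGraph_adj_iff_of_val_lt {q ℓ : ℕ} {a b : Fin q} (hab : a.val < b.val) :
    (webGraph q ℓ).Adj a b ↔ ℓ ≤ b.val - a.val ∧ b.val - a.val ≤ q - ℓ := by
  rw [webGraph, SimpleGraph.fromRel_adj, max_comm b.val, min_comm b.val, or_self,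
    max_eq_right hab.le, min_eq_left hab.le]
  exact and_iff_right (Fin.ne_of_lt hab)

theorem card_le_div_of_isClique_webGraph {q ℓ : ℕ} (hℓ : 0 < ℓ) (hℓq : ℓ ≤ q)
    {s : Finset (Fin q)} (hs : (webGraph q ℓ).IsClique (s : Set (Fin q))) :
    s.card ≤ q / ℓ := by
  rcases s.eq_empty_or_nonempty with rfl | hne
  · simp
  set x₀ := s.min' hne
  have hadj : ∀ x ∈ s, ∀ y ∈ s, x.val < y.val → ℓ ≤ y.val - x.val ∧ y.val - x.val ≤ q - ℓ :=
    fun x hx y hy hxy => (webGraph_adj_iff_of_val_lt hxy).mp (hs hx hy (Fin.ne_of_lt hxy))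
  have hwindow : ∀ x ∈ s.map Fin.valEmbedding, x₀.val ≤ x ∧ x ≤ x₀.val + (q - ℓ) := by
    simp only [Finset.mem_map, Fin.valEmbedding_apply, forall_exists_index, and_imp]
    rintro _ x hx rfl
    have hle : x₀ ≤ x := s.min'_le x hx
    rcases hle.lt_or_eq with hlt | heq
    · have := hadj x₀ (s.min'_mem hne) x hx hlt
      omega
    · simp [heq]
  have hsep : ∀ x ∈ s.map Fin.valEmbedding, ∀ y ∈ s.map Fin.valEmbedding, x < y → x + ℓ ≤ y := by
    simp only [Finset.mem_map, Fin.valEmbedding_apply, forall_exists_index, and_imp]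
    rintro _ x hx rfl _ y hy rfl hxy
    have := hadj x hx y hy hxy
    omega
  calc s.card = (s.map Fin.valEmbedding).card := (Finset.card_map _).symm
    _ ≤ (q - ℓ) / ℓ + 1 := Finset.card_le_div_add_one_of_forall_add_le hℓ hwindow hsep
    _ = q / ℓ := (Nat.div_eq_sub_div hℓ hℓq).symm

theorem Nat.pos_of_lt_div {i q ℓ : ℕ} (hi : i < q / ℓ) : 0 < ℓ :=
  Nat.pos_of_ne_zero (by rintro rfl; simp at hi)

theorem Nat.mul_add_le_of_lt_div {i q ℓ : ℕ} (hi : i < q / ℓ) : i * ℓ + ℓ ≤ q := by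
  have := (Nat.le_div_iff_mul_le (Nat.pos_of_lt_div hi)).mp hi
  rwa [Nat.succ_mul] at this

def webMultiples (q ℓ : ℕ) : Fin (q / ℓ) ↪ Fin q where
  toFun i := ⟨i.val * ℓ, by
    have := Nat.mul_add_le_of_lt_div i.isLt
    have := Nat.pos_of_lt_div i.isLt
    omega⟩
  inj' i j hij := Fin.ext (Nat.eq_of_mul_eq_mul_right (Nat.pos_of_lt_div i.isLt) (Fin.mk.inj hij))

@[simp]
theorem webMultiples_val (q ℓ : ℕ) (i : Fin (q / ℓ)) : (webMultiples q ℓ i).val = i.val * ℓ :=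
  rfl

theorem isClique_webGraph_webMultiples (q ℓ : ℕ) :
    (webGraph q ℓ).IsClique (Finset.univ.map (webMultiples q ℓ) : Set (Fin q)) := by
  suffices h : ∀ i j, i < j → (webGraph q ℓ).Adj (webMultiples q ℓ i) (webMultiples q ℓ j) by
    simp only [Finset.coe_map, Finset.coe_univ, Set.image_univ]
    rintro _ ⟨i, rfl⟩ _ ⟨j, rfl⟩ hne
    rcases (ne_of_apply_ne _ hne).lt_or_gt with hij | hji
    · exact h i j hij
    · exact (h j i hji).symm
  intro i j hij
  have hmul : i.val * ℓ + ℓ ≤ j.val * ℓ := by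
    rw [← Nat.succ_mul]; exact Nat.mul_le_mul_right ℓ hij
  have hj := Nat.mul_add_le_of_lt_div j.isLt
  have hℓ := Nat.pos_of_lt_div i.isLt
  rw [webGraph_adj_iff_of_val_lt (by simp only [webMultiples_val]; omega)]
  simp only [webMultiples_val]
  omega

/-- The independence number of the antiweb `W̄_ℓ^q` (the complement of the web,
ℓ ≥ 2, q ≥ 2ℓ) equals `⌊q/ℓ⌋`. -/
theorem stmt13 (q ℓ : ℕ) (h2 : 2 ≤ ℓ) (hq : 2 * ℓ ≤ q) :
    IsGreatest {k | ∃ s : Finset (Fin q),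
      (∀ a ∈ s, ∀ b ∈ s, a ≠ b → ¬ (webGraph q ℓ)ᶜ.Adj a b) ∧ s.card = k} (q / ℓ) := by
  refine ⟨⟨Finset.univ.map (webMultiples q ℓ), ?_, by simp⟩, ?_⟩
  · exact (SimpleGraph.isIndepSet_compl _).mpr (isClique_webGraph_webMultiples q ℓ)
  · rintro k ⟨s, hs, rfl⟩
    exact card_le_div_of_isClique_webGraph (by omega) (by omega)
      ((SimpleGraph.isIndepSet_compl _).mp hs)
end

section
/- For integers ℓ ≥ 2 and q ≥ 2ℓ, the chromatic number of the web W_ℓ^q equals ⌈q/ℓ⌉ (i.e., χ(H) = ⌈n/α(H)⌉ for H = W_ℓ^q with n = q vertices). -/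
lemma webGraph_adj (q ℓ : ℕ) (v w : Fin q) :
    (webGraph q ℓ).Adj v w ↔ v ≠ w ∧
      (ℓ ≤ max v.val w.val - min v.val w.val ∧ max v.val w.val - min v.val w.val ≤ q - ℓ) := by
  simp only [webGraph, SimpleGraph.fromRel_adj]
  rw [max_comm w.val v.val, min_comm w.val v.val]
  tauto


/-- Key combinatorial lemma: a set of naturals below `q` whose pairwise "circular
distances" are `< ℓ` has at most `ℓ` elements, provided `2ℓ ≤ q`. -/
lemma webIndep_card_le (ℓ : ℕ) (hℓ : 1 ≤ ℓ) :
    ∀ q, 2 * ℓ ≤ q → ∀ S : Finset ℕ, (∀ a ∈ S, a < q) →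
      (∀ a ∈ S, ∀ b ∈ S, a < b → (b - a < ℓ ∨ q - ℓ < b - a)) → S.card ≤ ℓ := by
  intro q
  induction q using Nat.strong_induction_on with
  | _ q ih =>
    intro hq S hlt hd
    rcases eq_or_lt_of_le hq with heq | hgt
    · -- base case : q = 2ℓ, the map a ↦ a % ℓ is injective on S
      have : S.card ≤ (Finset.range ℓ).card := by
        apply Finset.card_le_card_of_injOn (fun a => a % ℓ)
        · intro a _; exact Finset.mem_range.mpr (Nat.mod_lt _ hℓ)
        · intro a ha b hb hab
          rcases lt_trichotomy a b with h | h | h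
          · exfalso
            have hdvd : ℓ ∣ b - a := (Nat.modEq_iff_dvd' h.le).mp hab
            rcases hd a ha b hb h with h1 | h1
            · have := Nat.le_of_dvd (by omega) hdvd; omega
            · have hb' := hlt b hb
              have h2 : b - a < 2 * ℓ := by omega
              obtain ⟨c, hc⟩ := hdvd
              have : q - ℓ = ℓ := by omega
              rcases le_or_gt c 1 with hc1 | hc1
              · have := Nat.mul_le_mul_left ℓ hc1; omega
              · have := Nat.mul_le_mul_left ℓ hc1; omega
          · exact h
          · exfalso
            have hdvd : ℓ ∣ a - b := (Nat.modEq_iff_dvd' h.le).mp hab.symm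
            rcases hd b hb a ha h with h1 | h1
            · have := Nat.le_of_dvd (by omega) hdvd; omega
            · have ha' := hlt a ha
              have h2 : a - b < 2 * ℓ := by omega
              obtain ⟨c, hc⟩ := hdvd
              have : q - ℓ = ℓ := by omega
              rcases le_or_gt c 1 with hc1 | hc1
              · have := Nat.mul_le_mul_left ℓ hc1; omega
              · have := Nat.mul_le_mul_left ℓ hc1; omega
      simpa using this
    · -- inductive step : q > 2ℓ; find a vacant point and delete it
      have hvac : ∃ v, v < q ∧ v ∉ S := by
        by_contra h
        push_neg at h
        have h0 : (0 : ℕ) ∈ S := h 0 (by omega)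
        have hl : ℓ ∈ S := h ℓ (by omega)
        have := hd 0 h0 ℓ hl (by omega)
        omega
      obtain ⟨v, hvq, hvS⟩ := hvac
      set f : ℕ → ℕ := fun a => if a < v then a else a - 1 with hf
      have hmono : ∀ a ∈ S, ∀ b ∈ S, a < b → f a < f b := by
        intro a ha b hb hab
        have hav : a ≠ v := fun h => hvS (h ▸ ha)
        have hbv : b ≠ v := fun h => hvS (h ▸ hb)
        simp only [hf]
        split <;> split <;> omega
      have hcard : (S.image f).card = S.card := by
        apply Finset.card_image_of_injOn
        intro a ha b hb hab
        rcases lt_trichotomy a b with h | h | h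
        · exact absurd hab (Nat.ne_of_lt (hmono a ha b hb h))
        · exact h
        · exact absurd hab.symm (Nat.ne_of_lt (hmono b hb a ha h))
      have key := ih (q - 1) (by omega) (by omega) (S.image f) ?_ ?_
      · omega
      · intro x hx
        obtain ⟨a, ha, rfl⟩ := Finset.mem_image.mp hx
        have := hlt a ha
        have hav : a ≠ v := fun h => hvS (h ▸ ha)
        simp only [hf]; split <;> omega
      · intro x hx y hy hxy
        obtain ⟨a, ha, rfl⟩ := Finset.mem_image.mp hx
        obtain ⟨b, hb, rfl⟩ := Finset.mem_image.mp hy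
        have hab : a < b := by
          rcases lt_trichotomy a b with h | h | h
          · exact h
          · exfalso; subst h; omega
          · exact absurd (hmono b hb a ha h) (by omega)
        have hav : a ≠ v := fun h => hvS (h ▸ ha)
        have hbv : b ≠ v := fun h => hvS (h ▸ hb)
        have hbq := hlt b hb
        rcases hd a ha b hb hab with h1 | h1 <;>
          · simp only [hf]; split <;> split <;> omega


/-- The chromatic number of the web `W_ℓ^q` (ℓ ≥ 2, q ≥ 2ℓ) equals
`⌈q/ℓ⌉ = (q + ℓ − 1)/ℓ`. -/
theorem stmt14 (q ℓ : ℕ) (h2 : 2 ≤ ℓ) (hq : 2 * ℓ ≤ q) :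
    (webGraph q ℓ).chromaticNumber = (((q + ℓ - 1) / ℓ : ℕ) : ℕ∞) := by
  have hℓ0 : 0 < ℓ := by omega
  have hq0 : 0 < q := by omega
  have hK : (q + ℓ - 1) / ℓ = (q - 1) / ℓ + 1 := by
    rw [show q + ℓ - 1 = (q - 1) + ℓ by omega, Nat.add_div_right _ hℓ0]
  -- upper bound: color v by v / ℓ
  have hcol : (webGraph q ℓ).Colorable ((q + ℓ - 1) / ℓ) := by
    refine ⟨SimpleGraph.Coloring.mk (fun v => ⟨v.val / ℓ, ?_⟩) ?_⟩
    · rw [hK]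
      have : v.val / ℓ ≤ (q - 1) / ℓ := Nat.div_le_div_right (by omega : v.val ≤ q - 1)
      omega
    · intro a b hadj
      rw [webGraph_adj] at hadj
      obtain ⟨hne, h1, h1'⟩ := hadj
      simp only [Ne, Fin.mk.injEq]
      intro hdiv
      have ha := Nat.div_add_mod a.val ℓ
      have hb := Nat.div_add_mod b.val ℓ
      have ha2 : a.val % ℓ < ℓ := Nat.mod_lt _ hℓ0
      have hb2 : b.val % ℓ < ℓ := Nat.mod_lt _ hℓ0
      rw [hdiv] at ha
      omega
  -- lower bound: no coloring with (q-1)/ℓ colors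
  have hlow : ¬ (webGraph q ℓ).Colorable ((q - 1) / ℓ) := by
    rintro ⟨C⟩
    set n := (q - 1) / ℓ with hn
    have hcards : ∀ c : Fin n, (Finset.univ.filter fun v => C v = c).card ≤ ℓ := by
      intro c
      set T := (Finset.univ.filter fun v => C v = c) with hT
      have hcardeq : (T.image Fin.val).card = T.card :=
        Finset.card_image_of_injOn (Fin.val_injective.injOn)
      rw [← hcardeq]
      refine webIndep_card_le ℓ (by omega) q hq _ ?_ ?_
      · intro x hx
        obtain ⟨va, _, rfl⟩ := Finset.mem_image.mp hx
        exact va.isLt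
      · intro x hx y hy hxy
        obtain ⟨va, hva, rfl⟩ := Finset.mem_image.mp hx
        obtain ⟨vb, hvb, rfl⟩ := Finset.mem_image.mp hy
        have hca : C va = c := (Finset.mem_filter.mp hva).2
        have hcb : C vb = c := (Finset.mem_filter.mp hvb).2
        have hne : va ≠ vb := by
          intro h; rw [h] at hxy; exact lt_irrefl _ hxy
        have hnadj : ¬ (webGraph q ℓ).Adj va vb := by
          intro h
          exact C.valid h (by rw [hca, hcb])
        have hP : ¬ (ℓ ≤ max va.val vb.val - min va.val vb.val ∧
            max va.val vb.val - min va.val vb.val ≤ q - ℓ) :=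
          fun hp => hnadj ((webGraph_adj q ℓ va vb).mpr ⟨hne, hp⟩)
        omega
    have hsum : (Finset.univ : Finset (Fin q)).card =
        ∑ c : Fin n, (Finset.univ.filter fun v => C v = c).card :=
      Finset.card_eq_sum_card_fiberwise (fun x _ => Finset.mem_univ _)
    rw [Finset.card_univ, Fintype.card_fin] at hsum
    have h3 : q ≤ n * ℓ := by
      rw [hsum]
      calc ∑ c : Fin n, (Finset.univ.filter fun v => C v = c).card
          ≤ ∑ _c : Fin n, ℓ := Finset.sum_le_sum (fun c _ => hcards c)
        _ = n * ℓ := by simp [Finset.sum_const, Finset.card_univ]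
    have h4 : n * ℓ ≤ q - 1 := by
      rw [hn]; exact Nat.div_mul_le_self _ _
    omega
  apply le_antisymm
  · exact hcol.chromaticNumber_le
  · have h5 : ¬ (webGraph q ℓ).chromaticNumber ≤ (((q - 1) / ℓ : ℕ) : ℕ∞) := by
      rw [SimpleGraph.chromaticNumber_le_iff_colorable]
      exact hlow
    have h6 : (((q - 1) / ℓ : ℕ) : ℕ∞) < (webGraph q ℓ).chromaticNumber := not_le.mp h5
    have h7 := (ENat.add_one_le_iff (by exact_mod_cast ENat.coe_ne_top _)).mpr h6
    rw [hK]
    push_cast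
    exact_mod_cast h7
end

section
/- For integers ℓ ≥ 2 and q ≥ 2ℓ, the chromatic number of the antiweb W̄_ℓ^q equals ⌈q/⌊q/ℓ⌋⌉. -/
namespace AW

variable {q ℓ : ℕ}

lemma compl_adj (i j : Fin q) :
    (webGraph q ℓ)ᶜ.Adj i j ↔ i ≠ j ∧
      ¬(ℓ ≤ max i.val j.val - min i.val j.val ∧
        max i.val j.val - min i.val j.val ≤ q - ℓ) := by
  simp only [SimpleGraph.compl_adj, webGraph, SimpleGraph.fromRel_adj]
  rw [max_comm j.val i.val, min_comm j.val i.val]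
  tauto

/-- auxiliary: spread-out sets have min + (card-1)·ℓ ≤ max -/
lemma min_add_le_max (ℓ : ℕ) (S : Finset ℕ)
    (h : ∀ a ∈ S, ∀ b ∈ S, a < b → ℓ ≤ b - a) (hne : S.Nonempty) :
    S.min' hne + (S.card - 1) * ℓ ≤ S.max' hne := by
  induction S using Finset.strongInduction with
  | _ S ih =>
    by_cases hc : S.card ≤ 1
    · have : S.card - 1 = 0 := by omega
      rw [this, Nat.zero_mul, Nat.add_zero]
      exact S.min'_le _ (S.max'_mem hne)
    · push_neg at hc
      set M := S.max' hne with hM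
      set S' := S.erase M with hS'
      have hMmem : M ∈ S := S.max'_mem hne
      have hcard' : S'.card = S.card - 1 := by rw [hS', Finset.card_erase_of_mem hMmem]
      have hne' : S'.Nonempty := Finset.card_pos.mp (by omega)
      have hsub : S' ⊂ S := Finset.erase_ssubset hMmem
      have key := ih S' hsub (fun a ha b hb hab =>
        h a (Finset.mem_of_mem_erase ha) b (Finset.mem_of_mem_erase hb) hab) hne'
      have hmax' : S'.max' hne' + ℓ ≤ M := by
        have hmem : S'.max' hne' ∈ S' := S'.max'_mem hne'
        have h1 : S'.max' hne' ≠ M := Finset.ne_of_mem_erase hmem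
        have h2 : S'.max' hne' ≤ M := S.le_max' _ (Finset.mem_of_mem_erase hmem)
        have h3 : S'.max' hne' < M := lt_of_le_of_ne h2 h1
        have h4 := h _ (Finset.mem_of_mem_erase hmem) M hMmem h3
        omega
      have hmin : S.min' hne ≤ S'.min' hne' :=
        S.min'_le _ (Finset.mem_of_mem_erase (S'.min'_mem hne'))
      have hmul : (S.card - 1) * ℓ = (S'.card - 1) * ℓ + ℓ := by
        have : S.card - 1 = (S'.card - 1) + 1 := by omega
        rw [this]; ring
      omega

lemma indep_card (hl : 0 < ℓ) (hlq : ℓ ≤ q) (S : Finset ℕ)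
    (h : ∀ a ∈ S, ∀ b ∈ S, a < b → ℓ ≤ b - a ∧ b - a ≤ q - ℓ) :
    S.card ≤ q / ℓ := by
  rw [Nat.le_div_iff_mul_le hl]
  rcases S.eq_empty_or_nonempty with hS | hne
  · simp [hS]
  by_cases hc : S.card ≤ 1
  · have : S.card * ℓ ≤ ℓ := by
      calc S.card * ℓ ≤ 1 * ℓ := Nat.mul_le_mul_right ℓ hc
      _ = ℓ := one_mul ℓ
    omega
  · push_neg at hc
    have hkey := min_add_le_max ℓ S (fun a ha b hb hab => (h a ha b hb hab).1) hne
    have hlt : S.min' hne < S.max' hne := S.min'_lt_max'_of_card (by omega)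
    have hpair := h _ (S.min'_mem hne) _ (S.max'_mem hne) hlt
    have hmul : S.card * ℓ = (S.card - 1) * ℓ + ℓ := by
      have : S.card = (S.card - 1) + 1 := by omega
      nth_rewrite 1 [this]; ring
    omega

section Div

variable {a : ℕ} (ha : 0 < a)

/-- ceiling division -/
private def cl (a n : ℕ) : ℕ := (n + a - 1) / a

include ha

lemma le_mul_cl (n : ℕ) : n ≤ a * cl a n := by
  rcases Nat.eq_zero_or_pos n with h | h
  · simp [h]
  have h1 : n + a - 1 = (n - 1) + a := by omega
  unfold cl
  rw [h1, Nat.add_div_right _ ha, Nat.mul_succ]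
  have h2 := Nat.div_add_mod (n - 1) a
  have h3 := Nat.mod_lt (n - 1) ha
  omega

lemma cl_mul (n : ℕ) : cl a (a * n) = n := by
  unfold cl
  have h1 : a * n + a - 1 = a * n + (a - 1) := by omega
  rw [h1, Nat.mul_add_div ha, Nat.div_eq_of_lt (by omega), Nat.add_zero]

lemma cl_mono {m n : ℕ} (hmn : m ≤ n) : cl a m ≤ cl a n :=
  Nat.div_le_div_right (by omega)

lemma cl_add_le (x y : ℕ) : cl a (x + y) ≤ cl a x + cl a y := by
  unfold cl
  rw [Nat.div_le_iff_le_mul_add_pred ha]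
  have h1 := le_mul_cl ha x
  have h2 := le_mul_cl ha y
  unfold cl at h1 h2
  have h3 : a * ((x + a - 1)/a) + a * ((y + a - 1)/a)
      = a * ((x + a - 1)/a + (y + a - 1)/a) := by ring
  omega

lemma cl_add_mul (x y : ℕ) : cl a (x + a * y) = cl a x + y := by
  unfold cl
  have h1 : x + a * y + a - 1 = (x + a - 1) + a * y := by omega
  rw [h1, Nat.add_mul_div_left _ _ ha]

lemma cl_le_iff {x n : ℕ} : cl a x ≤ n ↔ x ≤ a * n := by
  unfold cl
  rw [Nat.div_le_iff_le_mul_add_pred ha]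
  omega

/-- `⌈mq/a⌉ + t·⌊q/a⌋ ≤ ⌈(m+t)q/a⌉` -/
lemma cl_step (q : ℕ) : ∀ t m : ℕ, cl a (m * q) + t * (q / a) ≤ cl a ((m + t) * q) := by
  intro t
  induction t with
  | zero => simp
  | succ t iht =>
    intro m
    have h1 : cl a ((m + 1) * q) + t * (q / a) ≤ cl a ((m + 1 + t) * q) := iht (m + 1)
    have h2 : cl a (m * q) + q / a ≤ cl a ((m + 1) * q) := by
      have h3 : a * (q / a) ≤ q := Nat.mul_div_le q a
      have h4 : m * q + a * (q / a) ≤ (m + 1) * q := by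
        have : (m+1)*q = m*q + q := by ring
        omega
      calc cl a (m * q) + q / a = cl a (m * q + a * (q/a)) := (cl_add_mul ha _ _).symm
        _ ≤ cl a ((m + 1) * q) := cl_mono ha h4
    have h5 : m + 1 + t = m + (t + 1) := by omega
    rw [h5] at h1
    have : (t + 1) * (q / a) = t * (q/a) + q/a := by ring
    omega

end Div

section Color

variable {q a : ℕ} (hq : 0 < q) (ha : 0 < a)

include hq ha

lemma s_le_self (i : ℕ) : cl a ((i * a / q) * q) ≤ i := by
  have h1 : (i * a / q) * q ≤ i * a := Nat.div_mul_le_self _ _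
  calc cl a ((i * a / q) * q) ≤ cl a (i * a) := cl_mono ha h1
    _ = i := by rw [Nat.mul_comm i a]; exact cl_mul ha i

lemma lt_s_succ (i : ℕ) : i < cl a ((i * a / q + 1) * q) := by
  have h1 : i * a < (i * a / q + 1) * q := by
    have h2 := Nat.div_add_mod (i * a) q
    have h3 := Nat.mod_lt (i * a) hq
    have h4 : (i * a / q + 1) * q = q * (i * a / q) + q := by ring
    omega
  have h5 : (i * a / q + 1) * q ≤ a * cl a ((i * a / q + 1) * q) := le_mul_cl ha _
  have h6 : a * i < a * cl a ((i * a / q + 1) * q) := by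
    have : a * i = i * a := Nat.mul_comm a i
    omega
  exact Nat.lt_of_mul_lt_mul_left h6

lemma color_lt {i : ℕ} (hi : i < q) :
    i - cl a ((i * a / q) * q) < cl a q := by
  have h1 := s_le_self hq ha i
  have h2 := lt_s_succ hq ha i
  have h3 : cl a ((i * a / q + 1) * q) ≤ cl a ((i * a / q) * q) + cl a q := by
    have h4 : (i * a / q + 1) * q = (i * a / q) * q + q := by ring
    rw [h4]
    exact cl_add_le ha _ _
  omega

lemma color_main {i j ℓ : ℕ} (hij : i < j) (hj : j < q) (hla : ℓ ≤ q / a)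
    (heq : i - cl a ((i * a / q) * q) = j - cl a ((j * a / q) * q)) :
    ℓ ≤ j - i ∧ j - i ≤ q - ℓ := by
  have hsi := s_le_self hq ha i
  have hsj := s_le_self hq ha j
  have hmle : i * a / q ≤ j * a / q :=
    Nat.div_le_div_right (Nat.mul_le_mul_right a (le_of_lt hij))
  have hmlt : i * a / q < j * a / q := by
    rcases lt_or_eq_of_le hmle with h | hcon
    · exact h
    · rw [hcon] at heq hsi
      omega
  have hstep := cl_step ha q (j * a / q - i * a / q) (i * a / q)
  rw [show i * a / q + (j * a / q - i * a / q) = j * a / q by omega] at hstep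
  have hstep' : cl a ((i * a / q) * q) + (q / a) ≤ cl a ((j * a / q) * q) := by
    have h3 : 1 * (q / a) ≤ (j * a / q - i * a / q) * (q / a) :=
      Nat.mul_le_mul_right _ (by omega)
    omega
  have hmja : j * a / q < a := by
    rw [Nat.div_lt_iff_lt_mul hq, Nat.mul_comm a q]
    exact Nat.mul_lt_mul_of_pos_right hj ha
  have hstep2 := cl_step ha q (a - j * a / q) (j * a / q)
  rw [show j * a / q + (a - j * a / q) = a by omega] at hstep2
  have hub : cl a ((j * a / q) * q) + (q / a) ≤ q := by
    have h2 : cl a (a * q) = q := cl_mul ha q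
    have h4 : 1 * (q / a) ≤ (a - j * a / q) * (q / a) :=
      Nat.mul_le_mul_right _ (by omega)
    omega
  omega

end Color

end AW

/-- The chromatic number of the antiweb `W̄_ℓ^q` (ℓ ≥ 2, q ≥ 2ℓ) equals
`⌈q/⌊q/ℓ⌋⌉ = (q + ⌊q/ℓ⌋ − 1)/⌊q/ℓ⌋`. -/
theorem stmt15 (q ℓ : ℕ) (h2 : 2 ≤ ℓ) (hq : 2 * ℓ ≤ q) :
    (webGraph q ℓ)ᶜ.chromaticNumber = (((q + q / ℓ - 1) / (q / ℓ) : ℕ) : ℕ∞) := by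
  have hℓ : 0 < ℓ := by omega
  have hq0 : 0 < q := by omega
  have ha : 0 < q / ℓ := Nat.div_pos (by omega) hℓ
  have hla : ℓ ≤ q / (q / ℓ) := by
    rw [Nat.le_div_iff_mul_le ha]
    calc ℓ * (q / ℓ) = (q / ℓ) * ℓ := Nat.mul_comm _ _
      _ ≤ q := Nat.div_mul_le_self q ℓ
  set a := q / ℓ with hadef
  set k := AW.cl a q with hkdef
  have hcol : ∀ i : Fin q, i.val - AW.cl a ((i.val * a / q) * q) < k :=
    fun i => AW.color_lt hq0 ha i.isLt
  let C : (webGraph q ℓ)ᶜ.Coloring (Fin k) :=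
    SimpleGraph.Coloring.mk
      (fun i => ⟨i.val - AW.cl a ((i.val * a / q) * q), hcol i⟩)
      (by
        intro i j hadj
        rw [AW.compl_adj] at hadj
        obtain ⟨hne, hnp⟩ := hadj
        intro hceq
        apply hnp
        have hteq : i.val - AW.cl a ((i.val * a / q) * q)
            = j.val - AW.cl a ((j.val * a / q) * q) := by
          simpa using congrArg Fin.val hceq
        rcases lt_or_gt_of_ne (fun h => hne (Fin.val_injective h)) with h | h
        · have hmm := AW.color_main hq0 ha h j.isLt hla hteq
          rw [Nat.max_eq_right (le_of_lt h), Nat.min_eq_left (le_of_lt h)]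
          exact hmm
        · have hmm := AW.color_main hq0 ha h i.isLt hla hteq.symm
          rw [Nat.max_eq_left (le_of_lt h), Nat.min_eq_right (le_of_lt h)]
          exact hmm)
  have hub : (webGraph q ℓ)ᶜ.chromaticNumber ≤ (k : ℕ∞) :=
    SimpleGraph.Colorable.chromaticNumber_le ⟨C⟩
  have hlb : (k : ℕ∞) ≤ (webGraph q ℓ)ᶜ.chromaticNumber := by
    rw [SimpleGraph.chromaticNumber]
    refine le_iInf₂ fun n hn => ?_
    rw [Nat.cast_le]
    obtain ⟨C'⟩ := hn
    have hfib : ∀ c : Fin n, (Finset.univ.filter fun v : Fin q => C' v = c).card ≤ a := by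
      intro c
      set F := Finset.univ.filter fun v : Fin q => C' v = c with hF
      have hcards : (F.image Fin.val).card = F.card :=
        Finset.card_image_of_injective F Fin.val_injective
      have hpair : ∀ x ∈ F.image Fin.val, ∀ y ∈ F.image Fin.val, x < y →
          ℓ ≤ y - x ∧ y - x ≤ q - ℓ := by
        intro x hx y hy hxy
        obtain ⟨u, hu, rfl⟩ := Finset.mem_image.mp hx
        obtain ⟨v, hv, rfl⟩ := Finset.mem_image.mp hy
        have hune : u ≠ v := fun hcon => by rw [hcon] at hxy; omega
        have hcu : C' u = c := (Finset.mem_filter.mp hu).2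
        have hcv : C' v = c := (Finset.mem_filter.mp hv).2
        have hnadj : ¬ (webGraph q ℓ)ᶜ.Adj u v := by
          intro hadj
          exact C'.valid hadj (hcu.trans hcv.symm)
        rw [AW.compl_adj] at hnadj
        push_neg at hnadj
        have hP := hnadj hune
        rwa [Nat.max_eq_right (le_of_lt hxy), Nat.min_eq_left (le_of_lt hxy)] at hP
      have hcard := AW.indep_card hℓ (by omega) (F.image Fin.val) hpair
      omega
    have hsum : (Finset.univ : Finset (Fin q)).card =
        ∑ c : Fin n, (Finset.univ.filter fun v : Fin q => C' v = c).card :=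
      Finset.card_eq_sum_card_fiberwise (fun v _ => Finset.mem_univ (C' v))
    have hle : q ≤ n * a := by
      have h1 : ∑ c : Fin n, (Finset.univ.filter fun v : Fin q => C' v = c).card
          ≤ ∑ _c : Fin n, a := Finset.sum_le_sum (fun c _ => hfib c)
      simp only [Finset.sum_const, Finset.card_univ, Fintype.card_fin, smul_eq_mul] at h1
      have h2 : (Finset.univ : Finset (Fin q)).card = q := by simp
      omega
    rw [hkdef, AW.cl_le_iff ha, Nat.mul_comm a n]
    exact hle
  exact le_antisymm hub hlb
end

section
/- A web W_ℓ^q (ℓ ≥ 2, q ≥ 2ℓ) is χ-critical (deleting any vertex decreases the chromatic number) if and only if ℓ divides q − 1. -/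
namespace WebAux

/-- forward (cyclic) distance from `i` to `j` -/
def fd {q : ℕ} (i j : Fin q) : ℕ := (j.val + q - i.val) % q

variable {q ℓ : ℕ}

lemma mod_cases (a : ℕ) (hq0 : 0 < q) (h : a < 2 * q) :
    (a < q ∧ a % q = a) ∨ (q ≤ a ∧ a % q = a - q) := by
  rcases lt_or_ge a q with h' | h'
  · exact Or.inl ⟨h', Nat.mod_eq_of_lt h'⟩
  · right
    refine ⟨h', ?_⟩
    rw [Nat.mod_eq_sub_mod h', Nat.mod_eq_of_lt (by omega)]

lemma fd_lt (hq0 : 0 < q) (i j : Fin q) : fd i j < q := Nat.mod_lt _ hq0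

lemma fd_eq (i j : Fin q) (hij : i.val ≤ j.val) : fd i j = j.val - i.val := by
  have h1 : j.val < q := j.isLt
  have h2 : i.val < q := i.isLt
  have h0 : 0 < q := by omega
  obtain ⟨iv, hi⟩ := i; obtain ⟨jv, hj⟩ := j
  simp only [fd] at *
  rcases mod_cases (jv + q - iv) h0 (by omega) with ⟨h, h'⟩ | ⟨h, h'⟩ <;> rw [h'] <;> omega

lemma fd_eq' (i j : Fin q) (hij : j.val < i.val) : fd i j = q + j.val - i.val := by
  have h1 : i.val < q := i.isLt
  have h2 : j.val < q := j.isLt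
  have h0 : 0 < q := by omega
  obtain ⟨iv, hi⟩ := i; obtain ⟨jv, hj⟩ := j
  simp only [fd] at *
  rcases mod_cases (jv + q - iv) h0 (by omega) with ⟨h, h'⟩ | ⟨h, h'⟩ <;> rw [h'] <;> omega

lemma fd_self (i : Fin q) : fd i i = 0 := by
  have := i.isLt
  rw [fd_eq i i le_rfl]; omega

lemma fd_eq_zero_iff (i j : Fin q) : fd i j = 0 ↔ i = j := by
  constructor
  · intro h
    rcases le_or_gt i.val j.val with h' | h'
    · rw [fd_eq i j h'] at h
      exact Fin.ext (by omega)
    · rw [fd_eq' i j h'] at h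
      have := i.isLt; have := j.isLt; omega
  · rintro rfl; exact fd_self i

/-- characterization of adjacency via forward distance -/
lemma adj_iff (hq : 2 * ℓ ≤ q) (i j : Fin q) :
    (webGraph q ℓ).Adj i j ↔ i ≠ j ∧ ℓ ≤ fd i j ∧ fd i j ≤ q - ℓ := by
  have hi := i.isLt; have hj := j.isLt
  constructor
  · rintro ⟨hne, h | h⟩ <;>
    · rcases le_or_gt i.val j.val with h' | h'
      · rw [fd_eq i j h']
        refine ⟨hne, ?_⟩
        rw [max_comm, min_comm] at h <;> omega
      · rw [fd_eq' i j h']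
        refine ⟨hne, ?_⟩
        rw [max_comm, min_comm] at h <;>
        · rcases h with ⟨ha, hb⟩
          constructor <;> omega
  · rintro ⟨hne, h1, h2⟩
    refine ⟨hne, Or.inl ?_⟩
    rcases le_or_gt i.val j.val with h' | h'
    · rw [fd_eq i j h'] at h1 h2
      rw [max_comm, min_comm]
      constructor <;> omega
    · rw [fd_eq' i j h'] at h1 h2
      rw [max_comm, min_comm]
      constructor <;> omega

lemma fd_val (a b : Fin q) :
    (fd a b = b.val - a.val ∧ a.val ≤ b.val) ∨
      (fd a b = q + b.val - a.val ∧ b.val < a.val) := by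
  rcases le_or_gt a.val b.val with h | h
  · exact Or.inl ⟨fd_eq a b h, h⟩
  · exact Or.inr ⟨fd_eq' a b h, h⟩

/-- shift a vertex forward by `o` -/
def shift (a : Fin q) (o : ℕ) : Fin q := ⟨(a.val + o) % q, Nat.mod_lt _ a.pos⟩

lemma fd_shift (a : Fin q) (o : ℕ) (ho : o < q) : fd a (shift a o) = o := by
  have hq0 := a.pos
  have ha := a.isLt
  have hv : (shift a o).val = (a.val + o) % q := rfl
  rcases mod_cases (a.val + o) hq0 (by omega) with ⟨h, h'⟩ | ⟨h, h'⟩ <;>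
    rw [h'] at hv <;>
    rcases fd_val a (shift a o) with ⟨he, hc⟩ | ⟨he, hc⟩ <;> omega

lemma shift_inj (o : ℕ) (ho : o < q) : Function.Injective (fun s : Fin q => shift s o) := by
  intro a b h
  have hq0 := a.pos
  have ha := a.isLt; have hb := b.isLt
  have h' : (a.val + o) % q = (b.val + o) % q := congrArg Fin.val h
  rcases mod_cases (a.val + o) hq0 (by omega) with ⟨h1, h1'⟩ | ⟨h1, h1'⟩ <;>
    rcases mod_cases (b.val + o) hq0 (by omega) with ⟨h2, h2'⟩ | ⟨h2, h2'⟩ <;>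
      rw [h1', h2'] at h' <;> exact Fin.ext (by omega)

lemma shift_offset_inj (a : Fin q) {o o' : ℕ} (ho : o < q) (ho' : o' < q)
    (h : shift a o = shift a o') : o = o' := by
  rw [← fd_shift a o ho, ← fd_shift a o' ho', h]

lemma fd_add (a b c : Fin q) :
    fd a c = fd a b + fd b c ∨
      (q ≤ fd a b + fd b c ∧ fd a c = fd a b + fd b c - q) := by
  have ha := a.isLt; have hb := b.isLt; have hc := c.isLt
  rcases fd_val a b with ⟨h1, h1'⟩ | ⟨h1, h1'⟩ <;>
    rcases fd_val b c with ⟨h2, h2'⟩ | ⟨h2, h2'⟩ <;>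
      rcases fd_val a c with ⟨h3, h3'⟩ | ⟨h3, h3'⟩ <;> omega

/-- Key lemma: an independent set in the web has at most `ℓ` vertices. -/
lemma indep_card_le (h2 : 2 ≤ ℓ) (hq : 2 * ℓ ≤ q) (S : Finset (Fin q))
    (hS : ∀ i ∈ S, ∀ j ∈ S, i ≠ j → ¬ (webGraph q ℓ).Adj i j) : S.card ≤ ℓ := by
  have hq0 : 0 < q := by omega
  have hfree : ∀ i ∈ S, ∀ j ∈ S, fd i j < ℓ ∨ q - ℓ < fd i j := by
    intro i hi j hj
    rcases eq_or_ne i j with rfl | hne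
    · left; rw [fd_self]; omega
    · have := hS i hi j hj hne
      rw [adj_iff hq] at this
      push_neg at this
      rcases Nat.lt_or_ge (fd i j) ℓ with h | h
      · exact Or.inl h
      · exact Or.inr (this hne h)
  rcases S.eq_empty_or_nonempty with rfl | ⟨t, ht⟩
  · simp
  obtain ⟨u, huS, humin⟩ := S.exists_min_image (fd (shift t (q - ℓ))) ⟨t, ht⟩
  set x : Fin q := shift t (q - ℓ) with hx
  set B : Finset (Fin q) := S.image (fun s => shift s ℓ) with hB
  set W : Finset (Fin q) := (Finset.range (q - 2 * ℓ)).image (fun k => shift u (q - 1 - k))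
    with hW
  have hBcard : B.card = S.card := Finset.card_image_of_injective _ (shift_inj ℓ (by omega))
  have hWcard : W.card = q - 2 * ℓ := by
    rw [hW, Finset.card_image_of_injOn, Finset.card_range]
    intro k hk k' hk' h
    simp only [Finset.coe_range, Set.mem_Iio] at hk hk'
    have := shift_offset_inj u (o := q - 1 - k) (o' := q - 1 - k') (by omega) (by omega) h
    omega
  have hSB : Disjoint S B := by
    rw [Finset.disjoint_left]
    intro a ha hab
    rw [hB, Finset.mem_image] at hab
    obtain ⟨s, hs, rfl⟩ := hab
    have h1 : fd s (shift s ℓ) = ℓ := fd_shift s ℓ (by omega)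
    have := hfree s hs _ ha
    omega
  have hSW : Disjoint S W := by
    rw [Finset.disjoint_left]
    intro a ha hab
    rw [hW, Finset.mem_image] at hab
    obtain ⟨k, hk, rfl⟩ := hab
    rw [Finset.mem_range] at hk
    have h1 : fd u (shift u (q - 1 - k)) = q - 1 - k := fd_shift u _ (by omega)
    have h2 := humin _ ha
    have h3 := fd_lt hq0 x (shift u (q - 1 - k))
    have h4 : fd t x = q - ℓ := fd_shift t _ (by omega)
    rcases fd_add x u (shift u (q - 1 - k)) with h5 | ⟨h5, h5'⟩
    · -- fd x a = m + q - 1 - k, with m ≤ k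
      have h6 := hfree t ht _ ha
      have h7 := fd_lt hq0 t (shift u (q - 1 - k))
      rcases fd_add t x (shift u (q - 1 - k)) with h8 | ⟨h8, h8'⟩ <;> omega
    · -- fd x a = m - (k+1) < m : contradicts minimality
      omega
  have hBW : Disjoint B W := by
    rw [Finset.disjoint_left]
    intro a ha hab
    rw [hB, Finset.mem_image] at ha
    rw [hW, Finset.mem_image] at hab
    obtain ⟨s, hs, rfl⟩ := ha
    obtain ⟨k, hk, hk'⟩ := hab
    rw [Finset.mem_range] at hk
    have h1 : fd u (shift s ℓ) = q - 1 - k := by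
      rw [← hk']; exact fd_shift u _ (by omega)
    have h2 : fd s (shift s ℓ) = ℓ := fd_shift s ℓ (by omega)
    have h3 := fd_lt hq0 u s
    have h4 := hfree u huS s hs
    rcases fd_add u s (shift s ℓ) with h5 | ⟨h5, h5'⟩ <;> omega
  have hcard : (S ∪ B ∪ W).card ≤ q := by
    have h1 := Finset.card_le_card (Finset.subset_univ (S ∪ B ∪ W))
    rwa [Finset.card_univ, Fintype.card_fin] at h1
  rw [Finset.card_union_of_disjoint (by
        rw [Finset.disjoint_union_left]; exact ⟨hSW, hBW⟩),
      Finset.card_union_of_disjoint hSB, hBcard, hWcard] at hcard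
  omega

/-- Upper bound: the web can be colored with `(q-1)/ℓ + 1 = ⌈q/ℓ⌉` colors. -/
lemma web_colorable (h2 : 2 ≤ ℓ) (hq : 2 * ℓ ≤ q) :
    (webGraph q ℓ).Colorable ((q - 1) / ℓ + 1) := by
  have hq0 : 0 < q := by omega
  refine ⟨SimpleGraph.Coloring.mk
    (fun v => ⟨v.val / ℓ, Nat.lt_succ_of_le (Nat.div_le_div_right (by omega))⟩) ?_⟩
  intro a b hadj heq
  rw [adj_iff hq] at hadj
  obtain ⟨hne, hfd1, hfd2⟩ := hadj
  have hd : a.val / ℓ = b.val / ℓ := congrArg Fin.val heq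
  have h1a : ℓ * (a.val / ℓ) + a.val % ℓ = a.val := Nat.div_add_mod a.val ℓ
  have h1b : ℓ * (b.val / ℓ) + b.val % ℓ = b.val := Nat.div_add_mod b.val ℓ
  rw [← hd] at h1b
  have hma : a.val % ℓ < ℓ := Nat.mod_lt _ (by omega)
  have hmb : b.val % ℓ < ℓ := Nat.mod_lt _ (by omega)
  have hvne : a.val ≠ b.val := fun h => hne (Fin.ext h)
  generalize hE : ℓ * (a.val / ℓ) = E at h1a h1b
  rcases fd_val a b with ⟨he, hc⟩ | ⟨he, hc⟩ <;> omega

/-- Upper bound: the web minus a vertex can be colored with `(q-2)/ℓ + 1` colors. -/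
lemma web_del_colorable (h2 : 2 ≤ ℓ) (hq : 2 * ℓ ≤ q) (v : Fin q) :
    ((webGraph q ℓ).induce {u | u ≠ v}).Colorable ((q - 2) / ℓ + 1) := by
  have hq0 : 0 < q := by omega
  have hbd : ∀ w : {u | u ≠ v}, (fd v w.val - 1) / ℓ < (q - 2) / ℓ + 1 := by
    intro w
    have h1 : fd v w.val ≠ 0 := fun h => w.2 ((fd_eq_zero_iff v w.val).mp h).symm
    have h2' := fd_lt hq0 v w.val
    exact Nat.lt_succ_of_le (Nat.div_le_div_right (by omega))
  refine ⟨SimpleGraph.Coloring.mk (fun w => ⟨(fd v w.val - 1) / ℓ, hbd w⟩) ?_⟩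
  intro a b hadj heq
  have hadj' : (webGraph q ℓ).Adj a.val b.val := hadj
  rw [adj_iff hq] at hadj'
  obtain ⟨hne, hfd1, hfd2⟩ := hadj'
  have hd : (fd v a.val - 1) / ℓ = (fd v b.val - 1) / ℓ := congrArg Fin.val heq
  have h1a : ℓ * ((fd v a.val - 1) / ℓ) + (fd v a.val - 1) % ℓ = fd v a.val - 1 :=
    Nat.div_add_mod _ ℓ
  have h1b : ℓ * ((fd v b.val - 1) / ℓ) + (fd v b.val - 1) % ℓ = fd v b.val - 1 :=
    Nat.div_add_mod _ ℓ
  rw [← hd] at h1b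
  have hma : (fd v a.val - 1) % ℓ < ℓ := Nat.mod_lt _ (by omega)
  have hmb : (fd v b.val - 1) % ℓ < ℓ := Nat.mod_lt _ (by omega)
  have hza : fd v a.val ≠ 0 := fun h => a.2 ((fd_eq_zero_iff v a.val).mp h).symm
  have hzb : fd v b.val ≠ 0 := fun h => b.2 ((fd_eq_zero_iff v b.val).mp h).symm
  have hab : fd a.val b.val ≠ 0 := fun h => hne ((fd_eq_zero_iff _ _).mp h ▸ rfl)
  generalize hE : ℓ * ((fd v a.val - 1) / ℓ) = E at h1a h1b
  rcases fd_add v a.val b.val with h5 | ⟨h5, h5'⟩ <;> omega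

/-- Lower bound via the key lemma: any coloring of the web needs `q ≤ ℓ * n`. -/
lemma web_lower (h2 : 2 ≤ ℓ) (hq : 2 * ℓ ≤ q) (n : ℕ)
    (hc : (webGraph q ℓ).Colorable n) : q ≤ ℓ * n := by
  obtain ⟨C⟩ := hc
  have key := Finset.card_le_mul_card_image (f := fun w => C w) Finset.univ ℓ ?_
  · have h1 : (Finset.univ.image fun w => C w).card ≤ n := by
      have := Finset.card_le_univ (Finset.univ.image fun w => C w)
      simpa using this
    calc q = (Finset.univ : Finset (Fin q)).card := by simp
    _ ≤ ℓ * (Finset.univ.image fun w => C w).card := key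
    _ ≤ ℓ * n := Nat.mul_le_mul_left _ h1
  · intro c _
    apply indep_card_le h2 hq
    intro i hi j hj hne hadj
    rw [Finset.mem_filter] at hi hj
    exact C.valid hadj (hi.2.trans hj.2.symm)

/-- Lower bound for the web minus a vertex. -/
lemma web_del_lower (h2 : 2 ≤ ℓ) (hq : 2 * ℓ ≤ q) (v : Fin q) (n : ℕ)
    (hc : ((webGraph q ℓ).induce {u | u ≠ v}).Colorable n) : q - 1 ≤ ℓ * n := by
  obtain ⟨C⟩ := hc
  have key := Finset.card_le_mul_card_image (f := fun w => C w)
    (Finset.univ : Finset {u | u ≠ v}) ℓ ?_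
  · have h1 : (Finset.univ.image fun w => C w).card ≤ n := by
      have := Finset.card_le_univ (Finset.univ.image fun w => C w)
      simpa using this
    have hcard : (Finset.univ : Finset {u | u ≠ v}).card = q - 1 := by
      rw [Finset.card_univ]
      have : Fintype.card {u : Fin q | u ≠ v} = Fintype.card (Fin q) - 1 :=
        Set.card_ne_eq v
      simpa using this
    calc q - 1 = (Finset.univ : Finset {u | u ≠ v}).card := hcard.symm
    _ ≤ ℓ * (Finset.univ.image fun w => C w).card := key
    _ ≤ ℓ * n := Nat.mul_le_mul_left _ h1
  · intro c _
    set T := (Finset.univ : Finset {u | u ≠ v}).filter (fun x => C x = c) with hT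
    have himg : (T.image Subtype.val).card = T.card :=
      Finset.card_image_of_injective _ Subtype.val_injective
    rw [← himg]
    apply indep_card_le h2 hq
    intro i hi j hj hne hadj
    rw [Finset.mem_image] at hi hj
    obtain ⟨a, ha, rfl⟩ := hi
    obtain ⟨b, hb, rfl⟩ := hj
    rw [hT, Finset.mem_filter] at ha hb
    have hadj' : ((webGraph q ℓ).induce {u | u ≠ v}).Adj a b := hadj
    exact C.valid hadj' (ha.2.trans hb.2.symm)

lemma chrom_web (h2 : 2 ≤ ℓ) (hq : 2 * ℓ ≤ q) :
    (webGraph q ℓ).chromaticNumber = ((q - 1) / ℓ + 1 : ℕ) := by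
  refine le_antisymm ((web_colorable h2 hq).chromaticNumber_le) ?_
  rw [SimpleGraph.chromaticNumber]
  refine le_iInf₂ fun n hn => ?_
  have h1 := web_lower h2 hq n hn
  have h2' : (q - 1) / ℓ + 1 ≤ n := by
    have : (q - 1) / ℓ < n := by
      rw [Nat.div_lt_iff_lt_mul (by omega : 0 < ℓ)]
      have : n * ℓ = ℓ * n := Nat.mul_comm _ _
      omega
    omega
  exact_mod_cast h2'

lemma chrom_web_del (h2 : 2 ≤ ℓ) (hq : 2 * ℓ ≤ q) (v : Fin q) :
    ((webGraph q ℓ).induce {u | u ≠ v}).chromaticNumber = ((q - 2) / ℓ + 1 : ℕ) := by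
  refine le_antisymm ((web_del_colorable h2 hq v).chromaticNumber_le) ?_
  rw [SimpleGraph.chromaticNumber]
  refine le_iInf₂ fun n hn => ?_
  have h1 := web_del_lower h2 hq v n hn
  have h2' : (q - 2) / ℓ + 1 ≤ n := by
    have : (q - 2) / ℓ < n := by
      rw [Nat.div_lt_iff_lt_mul (by omega : 0 < ℓ)]
      have : n * ℓ = ℓ * n := Nat.mul_comm _ _
      omega
    omega
  exact_mod_cast h2'

end WebAux


/-- A web `W_ℓ^q` (ℓ ≥ 2, q ≥ 2ℓ) is χ-critical (deleting any vertex decreases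
the chromatic number) iff `ℓ` divides `q − 1`. -/
theorem stmt16 (q ℓ : ℕ) (h2 : 2 ≤ ℓ) (hq : 2 * ℓ ≤ q) :
    (∀ v : Fin q,
        ((webGraph q ℓ).induce {u | u ≠ v}).chromaticNumber
          < (webGraph q ℓ).chromaticNumber) ↔ ℓ ∣ (q - 1) := by
  have hq0 : 0 < q := by omega
  have hsd : (q - 1) / ℓ = (q - 2) / ℓ + if ℓ ∣ (q - 1) then 1 else 0 := by
    have h : q - 1 = (q - 2) + 1 := by omega
    rw [h, Nat.succ_div, ← h]
  constructor
  · intro h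
    have h0 := h ⟨0, hq0⟩
    rw [WebAux.chrom_web_del h2 hq, WebAux.chrom_web h2 hq] at h0
    have h1 : (q - 2) / ℓ + 1 < (q - 1) / ℓ + 1 := by exact_mod_cast h0
    by_contra hnd
    rw [if_neg hnd] at hsd
    omega
  · intro hd v
    rw [WebAux.chrom_web_del h2 hq, WebAux.chrom_web h2 hq]
    rw [if_pos hd] at hsd
    exact_mod_cast (by omega : (q - 2) / ℓ + 1 < (q - 1) / ℓ + 1)
end

section
/- Given a graph G, a total order on V making V = {1,…,n}, and a fractional solution x of the LP relaxation of the representatives formulation for vertex coloring (satisfying Σ_{u ∈ N̄⁻[v]} x_{uv} ≥ 1 for all v, and Σ_{u∈K} x_{vu} ≤ x_{vv} for cliques K in N̄⁺(v), x ≥ 0), the assignment defined by ỹ_k := x_{kk} for all k ∈ V and x̃_{vk} := x_{kv} for all v ∈ V, k ∈ N̄⁻[v] (and x̃_{vk} := 0 otherwise) is feasible for the LP relaxation of the assignment formulation of vertex coloring and has the same objective value Σ_k ỹ_k = Σ_v x_{vv}. Consequently, the LP bound of the representatives formulation for vertex coloring is at least that of the assignment formulation. -/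
/-!
A representatives solution `x` becomes an assignment solution by letting vertex `v` take
color `k` with weight `x k v` whenever `k` may represent `v`, and opening color `k` to the
extent `x k k`. The covering constraint of `v` is then literally the assignment covering
constraint. For adjacent `u` and `v`, the colors that may serve both are the common
non-neighbours `k` below them; `{u, v}` is a clique in the upper anti-neighbourhood of `k`,
so the representatives clique constraint gives `x k u + x k v ≤ x k k`. Thus every
representatives value is an assignment value, which compares the two LP bounds.
-/

open scoped Classical

/-- Feasible value set of the LP relaxation of the assignment formulation for
vertex coloring (colors indexed by the vertices, objective `Σ_k ỹ_k`). -/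
noncomputable def colAssignLPset (n : ℕ) (G : SimpleGraph (Fin n)) : Set ℝ :=
  {val | ∃ (tx : Fin n → Fin n → ℝ) (ty : Fin n → ℝ),
    (∀ v k, 0 ≤ tx v k) ∧ (∀ k, 0 ≤ ty k) ∧
    (∀ v, 1 ≤ ∑ k, tx v k) ∧
    (∀ u v k, G.Adj u v → tx u k + tx v k ≤ ty k) ∧
    val = ∑ k, ty k}

/-- Feasible value set of the LP relaxation of the representatives formulation
for vertex coloring (objective `Σ_v x_{vv}`), w.r.t. the natural order on `Fin n`. -/
noncomputable def colRepLPset (n : ℕ) (G : SimpleGraph (Fin n)) : Set ℝ :=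
  {val | ∃ x : Fin n → Fin n → ℝ,
    (∀ u v, 0 ≤ x u v) ∧
    (∀ v, 1 ≤ x v v + ∑ u ∈ Finset.univ.filter (fun u => u < v ∧ ¬ G.Adj u v), x u v) ∧
    (∀ v (K : Finset (Fin n)), (∀ u ∈ K, v < u ∧ ¬ G.Adj v u) →
        (∀ a ∈ K, ∀ b ∈ K, a ≠ b → G.Adj a b) → ∑ u ∈ K, x v u ≤ x v v) ∧
    val = ∑ v, x v v}

open Finset

namespace SimpleGraph

variable {V : Type*} [LinearOrder V] (G : SimpleGraph V)

/-- `k ∈ N̄⁻[v]` in the paper's notation. -/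
def CanRepresent (k v : V) : Prop := k ≤ v ∧ (k = v ∨ ¬ G.Adj k v)

noncomputable def repToAssign (x : V → V → ℝ) (v k : V) : ℝ :=
  if G.CanRepresent k v then x k v else 0

variable {G}

lemma CanRepresent.lt_and_not_adj {k v : V} (h : G.CanRepresent k v) (hkv : k ≠ v) :
    k < v ∧ ¬ G.Adj k v :=
  ⟨lt_of_le_of_ne h.1 hkv, h.2.resolve_left hkv⟩

lemma repToAssign_nonneg {x : V → V → ℝ} (hnn : ∀ u v, 0 ≤ x u v) (v k : V) :
    0 ≤ G.repToAssign x v k := by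
  unfold repToAssign
  split_ifs
  exacts [hnn k v, le_rfl]

lemma sum_repToAssign [Fintype V] (x : V → V → ℝ) (v : V) :
    ∑ k, G.repToAssign x v k =
      x v v + ∑ u ∈ univ.filter (fun u => u < v ∧ ¬ G.Adj u v), x u v := by
  have hsupport : univ.filter (G.CanRepresent · v) =
      insert v (univ.filter (fun u => u < v ∧ ¬ G.Adj u v)) := by
    ext k
    rw [mem_filter, mem_insert, mem_filter]
    by_cases hkv : k = v
    · simp [hkv, CanRepresent]
    · simp [hkv, CanRepresent, lt_iff_le_and_ne]
  calc ∑ k, G.repToAssign x v k = ∑ k ∈ univ.filter (G.CanRepresent · v), x k v :=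
        (sum_filter _ _).symm
    _ = x v v + ∑ u ∈ univ.filter (fun u => u < v ∧ ¬ G.Adj u v), x u v := by
        rw [hsupport, sum_insert (by simp)]

section Clique

variable {x : V → V → ℝ} (hnn : ∀ u v, 0 ≤ x u v)
  (hclq : ∀ v (K : Finset V), (∀ u ∈ K, v < u ∧ ¬ G.Adj v u) →
    (∀ a ∈ K, ∀ b ∈ K, a ≠ b → G.Adj a b) → ∑ u ∈ K, x v u ≤ x v v)
include hnn hclq

lemma repToAssign_le_diag (v k : V) : G.repToAssign x v k ≤ x k k := by
  unfold repToAssign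
  split_ifs with hrep
  · rcases eq_or_ne k v with rfl | hkv
    · exact le_rfl
    · simpa using hclq k {v} (by simpa using hrep.lt_and_not_adj hkv) (by simp)
  · exact hnn k k

lemma repToAssign_add_repToAssign_le_diag {u v : V} (hadj : G.Adj u v) (k : V) :
    G.repToAssign x u k + G.repToAssign x v k ≤ x k k := by
  by_cases hu : G.CanRepresent k u
  swap
  · rw [repToAssign, if_neg hu, zero_add]
    exact repToAssign_le_diag hnn hclq v k
  by_cases hv : G.CanRepresent k v
  swap
  · rw [add_comm, repToAssign, if_neg hv, zero_add]
    exact repToAssign_le_diag hnn hclq u k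
  have hku : k ≠ u := by
    rintro rfl
    exact hv.2.elim hadj.ne (· hadj)
  have hkv : k ≠ v := by
    rintro rfl
    exact hu.2.elim hadj.ne.symm (· hadj.symm)
  have hpair := hclq k {u, v}
    (by simpa using ⟨hu.lt_and_not_adj hku, hv.lt_and_not_adj hkv⟩)
    (by simp [hadj, hadj.symm])
  rw [sum_pair hadj.ne] at hpair
  simpa [repToAssign, hu, hv] using hpair

lemma repToAssign_feasible [Fintype V]
    (hcover : ∀ v, 1 ≤ x v v + ∑ u ∈ univ.filter (fun u => u < v ∧ ¬ G.Adj u v), x u v) :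
    (∀ v k, 0 ≤ G.repToAssign x v k) ∧ (∀ k, 0 ≤ x k k) ∧
      (∀ v, 1 ≤ ∑ k, G.repToAssign x v k) ∧
      (∀ u v k, G.Adj u v → G.repToAssign x u k + G.repToAssign x v k ≤ x k k) :=
  ⟨repToAssign_nonneg hnn, fun k => hnn k k, fun v => sum_repToAssign x v ▸ hcover v,
    fun _ _ k hadj => repToAssign_add_repToAssign_le_diag hnn hclq hadj k⟩

end Clique

end SimpleGraph

lemma colRepLPset_subset_colAssignLPset (n : ℕ) (G : SimpleGraph (Fin n)) :
    colRepLPset n G ⊆ colAssignLPset n G := by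
  rintro _ ⟨x, hnn, hcover, hclq, rfl⟩
  obtain ⟨hx, hy, hcover', hedge⟩ := SimpleGraph.repToAssign_feasible hnn hclq hcover
  exact ⟨G.repToAssign x, fun k => x k k, hx, hy, hcover', hedge, rfl⟩

lemma colRepLPset_nonempty (n : ℕ) (G : SimpleGraph (Fin n)) : (colRepLPset n G).Nonempty := by
  refine ⟨n, fun u v => if u = v then 1 else 0, ?_, ?_, ?_, ?_⟩
  · intro u v
    positivity
  · simp
  · intro v K hK _
    rw [sum_eq_zero fun u hu => if_neg (hK u hu).1.ne]
    simp
  · simp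

lemma colAssignLPset_bddBelow (n : ℕ) (G : SimpleGraph (Fin n)) :
    BddBelow (colAssignLPset n G) := by
  refine ⟨0, ?_⟩
  rintro _ ⟨_, ty, _, hty, _, _, rfl⟩
  exact sum_nonneg fun k _ => hty k

/-- From a fractional solution `x` of the representatives LP for vertex coloring,
the assignment `ỹ_k = x_{kk}`, `x̃_{vk} = x_{kv}` for `k ∈ N̄⁻[v]` (and `0`
otherwise) is feasible for the assignment LP for vertex coloring, with the same
objective value; consequently the representatives LP bound dominates the
assignment LP bound. -/
theorem stmt17 (n : ℕ) (G : SimpleGraph (Fin n))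
    (x : Fin n → Fin n → ℝ)
    (hnn : ∀ u v, 0 ≤ x u v)
    (hcover : ∀ v, 1 ≤ x v v +
        ∑ u ∈ Finset.univ.filter (fun u => u < v ∧ ¬ G.Adj u v), x u v)
    (hclq : ∀ v (K : Finset (Fin n)), (∀ u ∈ K, v < u ∧ ¬ G.Adj v u) →
        (∀ a ∈ K, ∀ b ∈ K, a ≠ b → G.Adj a b) → ∑ u ∈ K, x v u ≤ x v v)
    (ty : Fin n → ℝ) (hty : ∀ k, ty k = x k k)
    (tx : Fin n → Fin n → ℝ)
    (htx : ∀ v k, tx v k = if k ≤ v ∧ (k = v ∨ ¬ G.Adj k v) then x k v else 0) :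
    ((∀ v k, 0 ≤ tx v k) ∧ (∀ k, 0 ≤ ty k) ∧
     (∀ v, 1 ≤ ∑ k, tx v k) ∧
     (∀ u v k, G.Adj u v → tx u k + tx v k ≤ ty k) ∧
     (∑ k, ty k = ∑ v, x v v)) ∧
    sInf (colAssignLPset n G) ≤ sInf (colRepLPset n G) := by
  obtain rfl : tx = G.repToAssign x := by
    ext v k
    rw [htx, SimpleGraph.repToAssign, SimpleGraph.CanRepresent]
    congr
  obtain rfl : ty = fun k => x k k := funext hty
  obtain ⟨hx, hy, hcover', hedge⟩ := SimpleGraph.repToAssign_feasible hnn hclq hcover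
  exact ⟨⟨hx, hy, hcover', hedge, rfl⟩, csInf_le_csInf (colAssignLPset_bddBelow n G)
    (colRepLPset_nonempty n G) (colRepLPset_subset_colAssignLPset n G)⟩
end

section
/- If (π, π₀) is a valid inequality for a polytope R ⊆ ℝ^d with nonempty face F = {x ∈ R : πx = π₀} of dimension f, and P = conv{(y, x) : x ∈ R ∩ {0,1}^d, y ≥ T(x)} for some function T bounded above by a constant T* on R ∩ {0,1}^d, then (0, π, π₀) is valid for P and the face F' = {(y,x) ∈ P : πx = π₀} has dimension at least f + 1. -/
set_option maxHeartbeats 1000000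


/-- Abstract lifting lemma (Lemma 1 of the paper): if `(π, π₀)` is valid for a
0/1 polytope `R ⊆ ℝ^d` with nonempty face `F` of dimension `f`, and
`P = conv{(y,x) : x ∈ R ∩ {0,1}^d, y ≥ T(x)}` with `T ≤ T*` on `R ∩ {0,1}^d`,
then `(0, π, π₀)` is valid for `P` and the corresponding face `F'` of `P` has
dimension at least `f + 1`. -/
theorem stmt18 (d : ℕ) (R : Set (Fin d → ℝ))
    (hR : R = convexHull ℝ (R ∩ {x | ∀ i, x i = 0 ∨ x i = 1}))
    (pi : Fin d → ℝ) (pi0 : ℝ)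
    (hvalid : ∀ x ∈ R, ∑ i, pi i * x i ≤ pi0)
    (F : Set (Fin d → ℝ)) (hF : F = {x ∈ R | ∑ i, pi i * x i = pi0})
    (hFne : F.Nonempty)
    (f : ℕ) (hf : f = Module.finrank ℝ (affineSpan ℝ F).direction)
    (T : (Fin d → ℝ) → ℝ) (Tstar : ℝ)
    (hT : ∀ x ∈ R ∩ {x | ∀ i, x i = 0 ∨ x i = 1}, T x ≤ Tstar)
    (P : Set (ℝ × (Fin d → ℝ)))
    (hP : P = convexHull ℝ
      {p : ℝ × (Fin d → ℝ) | p.2 ∈ R ∩ {x | ∀ i, x i = 0 ∨ x i = 1} ∧ T p.2 ≤ p.1})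
    (F' : Set (ℝ × (Fin d → ℝ)))
    (hF' : F' = {p ∈ P | ∑ i, pi i * p.2 i = pi0}) :
    (∀ p ∈ P, ∑ i, pi i * p.2 i ≤ pi0) ∧
    f + 1 ≤ Module.finrank ℝ (affineSpan ℝ F').direction := by
  classical
  set V : Set (Fin d → ℝ) := {x | ∀ i, x i = 0 ∨ x i = 1} with hV
  -- the linear functional on the product space
  have hlin : IsLinearMap ℝ (fun p : ℝ × (Fin d → ℝ) => ∑ i, pi i * p.2 i) := by
    constructor
    · intro p q
      simp [Prod.snd_add, mul_add, Finset.sum_add_distrib]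
    · intro c p
      simp [Finset.mul_sum, mul_comm, mul_assoc, mul_left_comm]
  -- Part 1: validity on P
  have hPvalid : ∀ p ∈ P, ∑ i, pi i * p.2 i ≤ pi0 := by
    intro p hp
    rw [hP] at hp
    have hconv : Convex ℝ {p : ℝ × (Fin d → ℝ) | ∑ i, pi i * p.2 i ≤ pi0} :=
      convex_halfSpace_le hlin pi0
    have hsub : {p : ℝ × (Fin d → ℝ) | p.2 ∈ R ∩ V ∧ T p.2 ≤ p.1}
        ⊆ {p : ℝ × (Fin d → ℝ) | ∑ i, pi i * p.2 i ≤ pi0} := by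
      intro q hq
      exact hvalid q.2 hq.1.1
    exact convexHull_min hsub hconv hp
  refine ⟨hPvalid, ?_⟩
  -- Part 2: F is the convex hull of its 0/1 points
  have hFsub : F ⊆ convexHull ℝ (F ∩ V) := by
    intro x hx
    rw [hF] at hx
    obtain ⟨hxR, hxpi⟩ := hx
    have hxhull : x ∈ convexHull ℝ (R ∩ V) := hR ▸ hxR
    rw [convexHull_eq] at hxhull
    obtain ⟨ι, t, w, z, hw0, hw1, hzm, hcm⟩ := hxhull
    -- pass through the linear functional
    have hx_eq : ∑ i ∈ t, w i * (∑ j, pi j * z i j) = pi0 := by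
      have h1 : x = ∑ i ∈ t, w i • z i := by
        rw [← hcm, Finset.centerMass_eq_of_sum_1 t z hw1]
      have h2 : (∑ j, pi j * x j) = ∑ i ∈ t, w i * (∑ j, pi j * z i j) := by
        simp only [h1, Finset.sum_apply, Pi.smul_apply, smul_eq_mul, Finset.mul_sum]
        rw [Finset.sum_comm]
        exact Finset.sum_congr rfl fun i _ => Finset.sum_congr rfl fun j _ => by ring
      rw [← h2, hxpi]
    -- each point with nonzero weight lies on the face
    have hface : ∀ i ∈ t, w i ≠ 0 → z i ∈ F ∩ V := by
      have hzero : ∑ i ∈ t, w i * (pi0 - ∑ j, pi j * z i j) = 0 := by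
        have : ∑ i ∈ t, w i * (pi0 - ∑ j, pi j * z i j)
            = (∑ i ∈ t, w i) * pi0 - ∑ i ∈ t, w i * (∑ j, pi j * z i j) := by
          rw [Finset.sum_mul, ← Finset.sum_sub_distrib]
          congr 1; ext i; ring
        rw [this, hw1, hx_eq]; ring
      have hnn : ∀ i ∈ t, 0 ≤ w i * (pi0 - ∑ j, pi j * z i j) := by
        intro i hi
        exact mul_nonneg (hw0 i hi) (sub_nonneg.2 (hvalid (z i) (hzm i hi).1))
      have hall := (Finset.sum_eq_zero_iff_of_nonneg hnn).1 hzero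
      intro i hi hwi
      have hterm := hall i hi
      have hpos : 0 < w i := lt_of_le_of_ne (hw0 i hi) (Ne.symm hwi)
      have hz0 : pi0 - ∑ j, pi j * z i j = 0 := by
        rcases mul_eq_zero.1 hterm with h | h
        · exact absurd h hwi
        · exact h
      refine ⟨?_, (hzm i hi).2⟩
      rw [hF]
      exact ⟨(hzm i hi).1, by linarith [hz0]⟩
    -- restrict to nonzero weights
    rw [← Finset.centerMass_filter_ne_zero z] at hcm
    rw [← hcm]
    apply Finset.centerMass_mem_convexHull
    · intro i hi
      exact hw0 i (Finset.mem_filter.1 hi).1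
    · rw [Finset.sum_filter_ne_zero, hw1]; norm_num
    · intro i hi
      obtain ⟨hit, hwi⟩ := Finset.mem_filter.1 hi
      exact hface i hit hwi
  -- F ∩ V is nonempty
  obtain ⟨x₁, hx₁F⟩ := hFne
  have hFVne : (F ∩ V).Nonempty := by
    by_contra h
    rw [Set.not_nonempty_iff_eq_empty] at h
    have := hFsub hx₁F
    rw [h] at this
    simp at this
  obtain ⟨x₀, hx₀⟩ := hFVne
  -- equal vector spans
  have hspan : vectorSpan ℝ F = vectorSpan ℝ (F ∩ V) := by
    apply le_antisymm
    · have h1 : affineSpan ℝ F ≤ affineSpan ℝ (F ∩ V) := by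
        rw [← affineSpan_convexHull (𝕜 := ℝ) (F ∩ V)]
        exact affineSpan_mono ℝ hFsub
      rw [← direction_affineSpan ℝ F, ← direction_affineSpan ℝ (F ∩ V)]
      exact AffineSubspace.direction_le h1
    · exact vectorSpan_mono ℝ Set.inter_subset_left
  -- membership facts in F'
  have hmemF' : ∀ x ∈ F ∩ V, ∀ y : ℝ, Tstar ≤ y → ((y, x) : ℝ × (Fin d → ℝ)) ∈ F' := by
    intro x hx y hy
    rw [hF']
    have hxR : x ∈ R := by rw [hF] at hx; exact hx.1.1
    have hxRV : x ∈ R ∩ V := ⟨hxR, hx.2⟩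
    constructor
    · rw [hP]
      exact subset_convexHull ℝ _ ⟨hxRV, le_trans (hT x hxRV) hy⟩
    · rw [hF] at hx; exact hx.1.2
  -- the embedding
  set L : (Fin d → ℝ) →ₗ[ℝ] ℝ × (Fin d → ℝ) := LinearMap.inr ℝ ℝ (Fin d → ℝ) with hL
  set W₁ : Submodule ℝ (ℝ × (Fin d → ℝ)) := Submodule.map L (vectorSpan ℝ F) with hW₁
  set v : ℝ × (Fin d → ℝ) := (1, 0) with hv
  -- W₁ is inside the vector span of F'
  have hW₁le : W₁ ≤ vectorSpan ℝ F' := by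
    rw [hW₁, hspan, vectorSpan_eq_span_vsub_set_right ℝ hx₀, Submodule.map_span,
      ← Set.image_comp]
    rw [Submodule.span_le]
    rintro _ ⟨x, hx, rfl⟩
    have h1 : ((Tstar, x) : ℝ × (Fin d → ℝ)) ∈ F' := hmemF' x hx Tstar le_rfl
    have h2 : ((Tstar, x₀) : ℝ × (Fin d → ℝ)) ∈ F' := hmemF' x₀ hx₀ Tstar le_rfl
    have := vsub_mem_vectorSpan ℝ h1 h2
    convert this using 1
    simp [hL, Prod.ext_iff]
  have hvmem : v ∈ vectorSpan ℝ F' := by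
    have h1 : ((Tstar + 1, x₀) : ℝ × (Fin d → ℝ)) ∈ F' :=
      hmemF' x₀ hx₀ (Tstar + 1) (by linarith)
    have h2 : ((Tstar, x₀) : ℝ × (Fin d → ℝ)) ∈ F' := hmemF' x₀ hx₀ Tstar le_rfl
    have := vsub_mem_vectorSpan ℝ h1 h2
    convert this using 1
    simp [hv, Prod.ext_iff]
  -- v is not in W₁
  have hvnot : v ∉ W₁ := by
    rintro ⟨u, -, hu⟩
    have : (L u).1 = (0 : ℝ) := rfl
    rw [hu] at this
    simp [hv] at this
  -- finrank counting
  have hlt : W₁ < W₁ ⊔ Submodule.span ℝ {v} := by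
    refine lt_of_le_of_ne le_sup_left ?_
    intro h
    apply hvnot
    rw [h]
    exact Submodule.mem_sup_right (Submodule.mem_span_singleton_self v)
  have hfr1 : Module.finrank ℝ W₁ = f := by
    rw [hf]
    have e := (Submodule.equivMapOfInjective L LinearMap.inr_injective
      (vectorSpan ℝ F)).symm
    rw [direction_affineSpan]
    exact e.finrank_eq
  have hfr2 : Module.finrank ℝ W₁ < Module.finrank ℝ (W₁ ⊔ Submodule.span ℝ {v} :
      Submodule ℝ (ℝ × (Fin d → ℝ))) :=
    Submodule.finrank_lt_finrank_of_lt hlt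
  have hle2 : W₁ ⊔ Submodule.span ℝ {v} ≤ vectorSpan ℝ F' := by
    refine sup_le hW₁le ?_
    rw [Submodule.span_le, Set.singleton_subset_iff]
    exact hvmem
  have hfr3 : Module.finrank ℝ (W₁ ⊔ Submodule.span ℝ {v} :
      Submodule ℝ (ℝ × (Fin d → ℝ))) ≤ Module.finrank ℝ (vectorSpan ℝ F') :=
    Submodule.finrank_mono hle2
  rw [direction_affineSpan]
  omega
end
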